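/- arXiv:2312.04144 — 4 statements merged into one kernel-verified Lean document; each statement's English description precedes it below -/
import Mathlib

section
/- For every natural number n and real x > 0, x · ∑_{i=0}^{n} (n choose i) (x+1)^{(i)} = ∑_{i=0}^{n+1} (n+1 choose i) x^{(i)} − ∑_{i=0}^{n} (n choose i) x^{(i)}, where x^{(i)} denotes the rising factorial. -/
/-- The rising factorial `x^{(i)} = x(x+1)⋯(x+i-1)`. -/
def risingFactorial (x : ℝ) (i : ℕ) : ℝ := ∏ j ∈ Finset.range i, (x + j)

lemma rf_mul (x : ℝ) (i : ℕ) :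
    x * risingFactorial (x + 1) i = risingFactorial x (i + 1) := by
  unfold risingFactorial
  rw [Finset.prod_range_succ']
  push_cast
  rw [mul_comm]
  congr 1
  · apply Finset.prod_congr rfl
    intro j _
    push_cast
    ring
  · simp

theorem stmt_8 (n : ℕ) (x : ℝ) (hx : 0 < x) :
    x * ∑ i ∈ Finset.range (n + 1), (n.choose i : ℝ) * risingFactorial (x + 1) i =
      (∑ i ∈ Finset.range (n + 2), ((n + 1).choose i : ℝ) * risingFactorial x i) -
        ∑ i ∈ Finset.range (n + 1), (n.choose i : ℝ) * risingFactorial x i := by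
  rw [Finset.mul_sum, eq_sub_iff_add_eq]
  have h1 : ∀ i ∈ Finset.range (n + 1),
      x * ((n.choose i : ℝ) * risingFactorial (x + 1) i)
        = (n.choose i : ℝ) * risingFactorial x (i + 1) := by
    intro i _
    rw [mul_left_comm, rf_mul]
  rw [Finset.sum_congr rfl h1]
  -- rewrite the shifted sum on the subtracted side
  have h2 : ∑ i ∈ Finset.range (n + 1), (n.choose i : ℝ) * risingFactorial x i
      = ∑ i ∈ Finset.range (n + 1), (n.choose (i + 1) : ℝ) * risingFactorial x (i + 1) + 1 := by
    have : ∑ i ∈ Finset.range (n + 2), (n.choose i : ℝ) * risingFactorial x i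
        = ∑ i ∈ Finset.range (n + 1), (n.choose i : ℝ) * risingFactorial x i := by
      rw [Finset.sum_range_succ]
      simp [Nat.choose_eq_zero_of_lt (Nat.lt_succ_self n)]
    rw [← this, Finset.sum_range_succ']
    simp [risingFactorial]
  rw [h2, Finset.sum_range_succ' _ (n + 1)]
  have h3 : ∀ i, ((n + 1).choose (i + 1) : ℝ) = n.choose i + n.choose (i + 1) := by
    intro i
    rw [Nat.choose_succ_succ]
    push_cast
    ring
  simp only [h3, add_mul]
  rw [Finset.sum_add_distrib]
  simp [risingFactorial]
  ring
end

section
/- For all natural numbers n, k, and i with 0 ≤ i ≤ n, the r-Stirling number of the second kind with r = k satisfies S_k(n+k, i+k) = (1/i!) ∑_{j=0}^{i} (i choose j) (−1)^{i−j} (k+j)^n. -/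
/-- Auxiliary: `rStirlingAux r m k = S_r(r + m, k)`, the r-Stirling number of the
second kind. -/
def rStirlingAux (r : ℕ) : ℕ → ℕ → ℕ
  | 0, k => if k = r then 1 else 0
  | _ + 1, 0 => 0
  | m + 1, k + 1 => (k + 1) * rStirlingAux r m (k + 1) + rStirlingAux r m k

/-- The r-Stirling numbers of the second kind `S_r(n, k)`. -/
def rStirling (r n k : ℕ) : ℕ :=
  if n < r then 0 else rStirlingAux r (n - r) k

lemma aux_eq_zero_of_lt (r : ℕ) : ∀ m k, k < r → rStirlingAux r m k = 0 := by
  intro m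
  induction m with
  | zero => intro k hk; simp [rStirlingAux, Nat.ne_of_lt hk]
  | succ m ih =>
    intro k hk
    cases k with
    | zero => rfl
    | succ k =>
      simp [rStirlingAux, ih _ hk, ih k (Nat.lt_of_succ_lt hk)]

lemma key (k : ℕ) : ∀ n i : ℕ,
    (Nat.factorial i : ℚ) * (rStirlingAux k n (i + k) : ℚ) =
      ∑ j ∈ Finset.range (i + 1),
        (i.choose j : ℚ) * (-1) ^ (i - j) * ((k : ℚ) + j) ^ n := by
  intro n
  induction n with
  | zero =>
    intro i
    have h : ∑ j ∈ Finset.range (i + 1),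
        (i.choose j : ℚ) * (-1) ^ (i - j) * ((k : ℚ) + j) ^ 0
        = ((1 : ℚ) + (-1)) ^ i := by
      rw [add_pow]
      refine Finset.sum_congr rfl fun j hj => by ring
    rw [h]
    cases i with
    | zero => simp [rStirlingAux]
    | succ i => simp [rStirlingAux, Nat.succ_ne_zero]
  | succ n ih =>
    intro i
    cases i with
    | zero =>
      cases k with
      | zero => simp [rStirlingAux]
      | succ k =>
        have h0 : rStirlingAux (k+1) (n+1) (k+1)
            = (k+1) * rStirlingAux (k+1) n (k+1) + rStirlingAux (k+1) n k := rfl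
        have h1 : rStirlingAux (k+1) n k = 0 := aux_eq_zero_of_lt _ _ _ (Nat.lt_succ_self k)
        have h2 := ih 0
        simp only [Nat.factorial_zero, Nat.cast_one, one_mul, Nat.zero_add] at h2 ⊢
        rw [h0, h1]
        push_cast
        rw [h2]
        simp [pow_succ]
        ring
    | succ i =>
      have h0 : rStirlingAux k (n+1) (i + 1 + k)
          = (i + 1 + k) * rStirlingAux k n (i + 1 + k) + rStirlingAux k n (i + k) := by
        rw [show i + 1 + k = (i + k) + 1 by omega]
        rfl
      have hA := ih (i + 1)
      rw [show i + 1 + 1 = i + 2 from rfl, Nat.factorial_succ] at hA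
      push_cast at hA
      have hB := ih i
      set f : ℕ → ℚ := fun j => ((i+1).choose j : ℚ) * (-1) ^ (i + 1 - j) * ((k : ℚ) + j) ^ n
        with hf
      have step1 : ∑ j ∈ Finset.range (i + 2), f j * ((k : ℚ) + j)
          = ((i : ℚ) + 1 + k) * ∑ j ∈ Finset.range (i + 2), f j
            + ∑ j ∈ Finset.range (i + 2), f j * ((j : ℚ) - (i + 1)) := by
        rw [Finset.mul_sum, ← Finset.sum_add_distrib]
        refine Finset.sum_congr rfl fun j hj => by ring
      have step2 : ∑ j ∈ Finset.range (i + 2), f j * ((j : ℚ) - (i + 1))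
          = ((i : ℚ) + 1) * ∑ j ∈ Finset.range (i + 1),
              (i.choose j : ℚ) * (-1) ^ (i - j) * ((k : ℚ) + j) ^ n := by
        rw [Finset.sum_range_succ]
        have : f (i + 1) * (((i + 1 : ℕ) : ℚ) - (i + 1)) = 0 := by push_cast; ring
        rw [this, add_zero, Finset.mul_sum]
        refine Finset.sum_congr rfl fun j hj => ?_
        have hj' : j ≤ i := Nat.lt_succ_iff.mp (Finset.mem_range.mp hj)
        have hc : ((i+1).choose j : ℚ) * ((i : ℚ) + 1 - j) = ((i : ℚ) + 1) * (i.choose j : ℚ) := by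
          have h' : (i.choose j * (i + 1) : ℕ) = ((i+1).choose j * (i + 1 - j) : ℕ) :=
            Nat.choose_mul_succ_eq i j
          have hq : ((i.choose j : ℚ)) * ((i : ℚ) + 1)
              = ((i+1).choose j : ℚ) * ((i : ℚ) + 1 - j) := by
            have := congrArg (Nat.cast : ℕ → ℚ) h'
            push_cast [Nat.cast_sub (Nat.le_succ_of_le hj')] at this
            linarith [this]
          linarith [hq]
        have hpow : ((-1 : ℚ)) ^ (i + 1 - j) = -(-1 : ℚ) ^ (i - j) := by
          rw [Nat.succ_sub hj', pow_succ]
          ring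
        rw [hf]
        simp only
        rw [hpow]
        linear_combination ((-1:ℚ) ^ (i - j) * ((k:ℚ)+j)^n) * hc
      have goalsum : ∑ j ∈ Finset.range (i + 2),
          ((i+1).choose j : ℚ) * (-1) ^ (i + 1 - j) * ((k : ℚ) + j) ^ (n+1)
          = ∑ j ∈ Finset.range (i + 2), f j * ((k : ℚ) + j) := by
        refine Finset.sum_congr rfl fun j hj => by rw [hf]; simp only; ring
      rw [h0]
      push_cast
      rw [Nat.factorial_succ]
      push_cast
      have hA' : ((i:ℚ)+1) * (i.factorial : ℚ) * (rStirlingAux k n (i + 1 + k) : ℚ)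
          = ∑ j ∈ Finset.range (i + 2), f j := by
        linear_combination hA
      calc ((i:ℚ)+1) * (i.factorial : ℚ) *
            (((i:ℚ) + 1 + k) * (rStirlingAux k n (i + 1 + k) : ℚ) + (rStirlingAux k n (i + k) : ℚ))
          = ((i:ℚ) + 1 + k) * (((i:ℚ)+1) * (i.factorial : ℚ) * (rStirlingAux k n (i + 1 + k) : ℚ))
            + ((i:ℚ)+1) * ((i.factorial : ℚ) * (rStirlingAux k n (i + k) : ℚ)) := by ring
        _ = ((i:ℚ) + 1 + k) * ∑ j ∈ Finset.range (i + 2), f j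
            + ((i:ℚ)+1) * ∑ j ∈ Finset.range (i + 1),
                (i.choose j : ℚ) * (-1) ^ (i - j) * ((k : ℚ) + j) ^ n := by rw [hA', hB]
        _ = ∑ j ∈ Finset.range (i + 2), f j * ((k : ℚ) + j) := by rw [step1, step2]
        _ = _ := goalsum.symm

theorem stmt_10 (n k i : ℕ) (hi : i ≤ n) :
    (rStirling k (n + k) (i + k) : ℚ) =
      (1 / (Nat.factorial i : ℚ)) *
        ∑ j ∈ Finset.range (i + 1),
          (i.choose j : ℚ) * (-1) ^ (i - j) * ((k : ℚ) + j) ^ n := by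
  have h : rStirling k (n + k) (i + k) = rStirlingAux k n (i + k) := by
    simp [rStirling, Nat.add_sub_cancel]
  rw [h, ← key k n i]
  have hf : (Nat.factorial i : ℚ) ≠ 0 := by
    exact_mod_cast Nat.factorial_ne_zero i
  field_simp
end

section
/- For every natural number n and real x, ∑_{j=0}^{n} ((j^n)/j!) · x^j · ∑_{i=0}^{n−j} ((−x)^i)/i! = ∑_{i=0}^{n} S(n,i) x^i, where S(n,i) are Stirling numbers of the second kind (with the convention 0^0 = 1). -/
open Finset

lemma tri {M : Type*} [AddCommMonoid M] (f : ℕ → ℕ → M) (n : ℕ) :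
    ∑ j ∈ range (n + 1), ∑ i ∈ range (n - j + 1), f j i
      = ∑ k ∈ range (n + 1), ∑ j ∈ range (k + 1), f j (k - j) := by
  induction n with
  | zero => simp
  | succ n ih =>
    rw [sum_range_succ (fun j => ∑ i ∈ range (n + 1 - j + 1), f j i) (n + 1)]
    have h1 : ∑ j ∈ range (n + 1), ∑ i ∈ range (n + 1 - j + 1), f j i
        = ∑ j ∈ range (n + 1), (∑ i ∈ range (n - j + 1), f j i + f j (n + 1 - j)) := by
      refine sum_congr rfl fun j hj => ?_
      have hj' : j ≤ n := by simpa [Nat.lt_succ_iff] using hj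
      rw [show n + 1 - j = n - j + 1 by omega, sum_range_succ]
    rw [h1, sum_add_distrib, ih, sum_range_succ (fun k => ∑ j ∈ range (k + 1), f j (k - j)) (n + 1),
      sum_range_succ (fun j => f j (n + 1 - j)) (n + 1)]
    simp [add_assoc]


/-- Stirling numbers of the second kind. -/
def stirlingSecond : ℕ → ℕ → ℕ
  | 0, 0 => 1
  | 0, _ + 1 => 0
  | _ + 1, 0 => 0
  | n + 1, k + 1 => (k + 1) * stirlingSecond n (k + 1) + stirlingSecond n k

lemma neg_one_split (a b : ℕ) (h : b ≤ a) : (-1 : ℝ) ^ (a - b) = (-1 : ℝ) ^ a * (-1 : ℝ) ^ b := by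
  have hsq : (-1 : ℝ) ^ b * (-1 : ℝ) ^ b = 1 := by
    rw [← pow_add, ← two_mul, pow_mul]; norm_num
  have h3 : (-1 : ℝ) ^ a = (-1 : ℝ) ^ (a - b) * (-1 : ℝ) ^ b := by
    rw [← pow_add, show a - b + b = a by omega]
  rw [h3, mul_assoc, hsq, mul_one]

-- base case n = 0, k+1
lemma base0 (k : ℕ) :
    ∑ j ∈ range (k + 1 + 1), (-1 : ℝ) ^ (k + 1 - j) * (j : ℝ) ^ 0 / (j.factorial * (k + 1 - j).factorial) = 0 := by
  have h : ∀ j ∈ range (k + 2), (-1 : ℝ) ^ (k + 1 - j) * (j : ℝ) ^ 0 / (j.factorial * (k + 1 - j).factorial)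
      = (-1 : ℝ) ^ (k + 1) * ((-1 : ℝ) ^ j * ((k + 1).choose j : ℝ)) / (k + 1).factorial := by
    intro j hj
    have hj' : j ≤ k + 1 := by simpa [Nat.lt_succ_iff] using hj
    rw [Nat.cast_choose ℝ hj', neg_one_split _ _ hj']
    have hf : ((k+1).factorial : ℝ) ≠ 0 := Nat.cast_ne_zero.2 (Nat.factorial_ne_zero _)
    have hf2 : ((j).factorial : ℝ) * ((k+1-j).factorial : ℝ) ≠ 0 := by positivity
    field_simp
  rw [sum_congr rfl h, ← sum_div, ← mul_sum]
  have := Int.alternating_sum_range_choose_of_ne (Nat.succ_ne_zero k)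
  have hr : ∑ j ∈ range (k + 2), (-1 : ℝ) ^ j * ((k + 1).choose j : ℝ) = 0 := by
    calc ∑ j ∈ range (k + 2), (-1 : ℝ) ^ j * ((k + 1).choose j : ℝ)
        = ((∑ j ∈ range (k + 2), (-1 : ℤ) ^ j * ((k + 1).choose j : ℤ) : ℤ) : ℝ) := by
          push_cast; exact Finset.sum_congr rfl fun _ _ => by ring
      _ = 0 := by rw [this]; simp
  rw [hr, mul_zero, zero_div]

lemma stirling_explicit : ∀ n k : ℕ, (stirlingSecond n k : ℝ)
    = ∑ j ∈ range (k + 1), (-1 : ℝ) ^ (k - j) * (j : ℝ) ^ n / (j.factorial * (k - j).factorial) := by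
  intro n
  induction n with
  | zero =>
    intro k
    match k with
    | 0 => simp [stirlingSecond]
    | k + 1 => rw [base0 k]; simp [stirlingSecond]
  | succ n ih =>
    intro k
    match k with
    | 0 => simp [stirlingSecond]
    | k + 1 =>
      have hfne : ∀ m : ℕ, ((m.factorial : ℝ)) ≠ 0 := fun m => Nat.cast_ne_zero.2 (Nat.factorial_ne_zero _)
      have stepA : ∑ j ∈ range (k + 1 + 1), (-1 : ℝ) ^ (k + 1 - j) * (j : ℝ) ^ (n + 1) / (j.factorial * (k + 1 - j).factorial)
          = ∑ j ∈ range (k + 1), (-1 : ℝ) ^ (k - j) * ((j : ℝ) + 1) ^ n / (j.factorial * (k - j).factorial) := by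
        rw [sum_range_succ' (fun j => (-1 : ℝ) ^ (k + 1 - j) * (j : ℝ) ^ (n + 1) / (j.factorial * (k + 1 - j).factorial)) (k + 1)]
        simp only [Nat.cast_zero, zero_pow (Nat.succ_ne_zero n), mul_zero, zero_mul, zero_div, add_zero]
        refine sum_congr rfl fun j hj => ?_
        rw [show k + 1 - (j + 1) = k - j by omega, Nat.factorial_succ]
        push_cast
        rw [pow_succ]
        field_simp
      have stepB : ((k : ℝ) + 1) * ∑ j ∈ range (k + 1 + 1), (-1 : ℝ) ^ (k + 1 - j) * (j : ℝ) ^ n / (j.factorial * (k + 1 - j).factorial)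
          = - ∑ j ∈ range (k + 1), (-1 : ℝ) ^ (k - j) * (j : ℝ) ^ n / (j.factorial * (k - j).factorial)
            + ∑ j ∈ range (k + 1), (-1 : ℝ) ^ (k - j) * ((j : ℝ) + 1) ^ n / (j.factorial * (k - j).factorial) := by
        rw [mul_sum, sum_range_succ]
        have hlast : ((k : ℝ) + 1) * ((-1 : ℝ) ^ (k + 1 - (k + 1)) * ((k + 1 : ℕ) : ℝ) ^ n / ((k+1).factorial * (k + 1 - (k + 1)).factorial))
            = ((k : ℝ) + 1) ^ n / k.factorial := by
          rw [Nat.sub_self, Nat.factorial_succ]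
          push_cast
          field_simp
          ring
        have hterm : ∀ j ∈ range (k + 1), ((k : ℝ) + 1) * ((-1 : ℝ) ^ (k + 1 - j) * (j : ℝ) ^ n / (j.factorial * (k + 1 - j).factorial))
            = -((-1 : ℝ) ^ (k - j) * (j : ℝ) ^ n / (j.factorial * (k - j).factorial))
              + (-1 : ℝ) ^ (k + 1 - j) * (j : ℝ) ^ n * j / (j.factorial * (k + 1 - j).factorial) := by
          intro j hj
          have hj' : j ≤ k := by simpa [Nat.lt_succ_iff] using hj
          obtain ⟨m, rfl⟩ : ∃ m, k = j + m := ⟨k - j, by omega⟩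
          rw [show j + m + 1 - j = m + 1 by omega, show j + m - j = m by omega,
            Nat.factorial_succ, pow_succ]
          push_cast
          field_simp
          ring
        rw [sum_congr rfl hterm, sum_add_distrib]
        have hv : ∑ j ∈ range (k + 1), (-1 : ℝ) ^ (k + 1 - j) * (j : ℝ) ^ n * j / (j.factorial * (k + 1 - j).factorial)
            = ∑ j ∈ range k, (-1 : ℝ) ^ (k - j) * ((j : ℝ) + 1) ^ n / (j.factorial * (k - j).factorial) := by
          rw [sum_range_succ' (fun j => (-1 : ℝ) ^ (k + 1 - j) * (j : ℝ) ^ n * j / (j.factorial * (k + 1 - j).factorial)) k]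
          simp only [Nat.cast_zero, mul_zero, zero_div, add_zero]
          refine sum_congr rfl fun j hj => ?_
          rw [show k + 1 - (j + 1) = k - j by omega, Nat.factorial_succ]
          push_cast
          field_simp
        rw [hv, hlast]
        rw [sum_range_succ (fun j => (-1 : ℝ) ^ (k - j) * ((j : ℝ) + 1) ^ n / (j.factorial * (k - j).factorial)) k]
        simp only [Nat.sub_self, pow_zero, Nat.factorial_zero, Nat.cast_one, mul_one, one_mul]
        rw [← sum_neg_distrib]
        ring
      rw [show (stirlingSecond (n+1) (k+1) : ℝ) = ((k:ℝ)+1) * (stirlingSecond n (k+1) : ℝ) + (stirlingSecond n k : ℝ) by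
        rw [show stirlingSecond (n+1) (k+1) = (k + 1) * stirlingSecond n (k + 1) + stirlingSecond n k from rfl]; push_cast; ring]
      rw [ih (k+1), ih k, stepA, stepB]
      ring

theorem stmt_11 (n : ℕ) (x : ℝ) :
    ∑ j ∈ Finset.range (n + 1),
        ((j : ℝ) ^ n / (Nat.factorial j : ℝ)) * x ^ j *
          ∑ i ∈ Finset.range (n - j + 1), (-x) ^ i / (Nat.factorial i : ℝ) =
      ∑ i ∈ Finset.range (n + 1), (stirlingSecond n i : ℝ) * x ^ i := by
  have h1 : ∑ j ∈ Finset.range (n + 1),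
        ((j : ℝ) ^ n / (Nat.factorial j : ℝ)) * x ^ j *
          ∑ i ∈ Finset.range (n - j + 1), (-x) ^ i / (Nat.factorial i : ℝ)
      = ∑ j ∈ range (n + 1), ∑ i ∈ range (n - j + 1),
          ((j : ℝ) ^ n / j.factorial) * x ^ j * ((-x) ^ i / i.factorial) := by
    exact sum_congr rfl fun j _ => mul_sum _ _ _
  rw [h1, tri (fun j i => ((j : ℝ) ^ n / j.factorial) * x ^ j * ((-x) ^ i / i.factorial)) n]
  refine sum_congr rfl fun k hk => ?_
  rw [stirling_explicit n k, sum_mul]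
  refine sum_congr rfl fun j hj => ?_
  have hj' : j ≤ k := by simpa [Nat.lt_succ_iff] using hj
  obtain ⟨m, rfl⟩ : ∃ m, k = j + m := ⟨k - j, by omega⟩
  rw [show j + m - j = m by omega, pow_add]
  ring
end

section
/- Let P(x) = ∑_{k=0}^{n} a_k x^k be a real polynomial and R(x) = ∑_{k=0}^{n} a_k x^{(k)} its rising-factorial counterpart. Then the 'inverse rising factorial transform' satisfies: ∑_{k=0}^{n} a_k (−1)^k T_k(−x) = e^{x} ∑_{k=0}^{∞} ((−1)^k P(−k)/k!) x^k for all real x, where T_k is the k-th Touchard polynomial. -/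
/-- The `k`-th Touchard polynomial evaluated at `y`. -/
def touchard (k : ℕ) (y : ℝ) : ℝ :=
  ∑ i ∈ Finset.range (k + 1), (stirlingSecond k i : ℝ) * y ^ i

lemma stirlingSecond_eq_zero : ∀ {j i : ℕ}, j < i → stirlingSecond j i = 0
  | 0, 0, h => absurd h (by simp)
  | 0, i + 1, _ => rfl
  | j + 1, 0, h => absurd h (by simp)
  | j + 1, i + 1, h => by
      have h1 : j < i + 1 := Nat.lt_of_succ_lt h
      have h2 : j < i := Nat.lt_of_succ_lt_succ h
      simp [stirlingSecond, stirlingSecond_eq_zero h1, stirlingSecond_eq_zero h2]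

lemma mul_descFactorial (m i : ℕ) :
    m * m.descFactorial i = m.descFactorial (i + 1) + i * m.descFactorial i := by
  rcases le_or_gt i m with h | h
  · rw [Nat.descFactorial_succ, ← Nat.add_mul, Nat.sub_add_cancel h]
  · rw [Nat.descFactorial_of_lt h, Nat.descFactorial_of_lt (Nat.lt_succ_of_lt h)]
    simp

/-- `m^j = ∑ S(j,i) descFactorial m i`. -/
lemma pow_eq_sum_stirling (j m : ℕ) :
    m ^ j = ∑ i ∈ Finset.range (j + 1), stirlingSecond j i * m.descFactorial i := by
  induction j with
  | zero => simp [stirlingSecond]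
  | succ j ih =>
    have key : m ^ (j + 1) = m * m ^ j := by ring
    rw [key, ih, Finset.mul_sum]
    have lhs_eq : ∑ i ∈ Finset.range (j + 1), m * (stirlingSecond j i * m.descFactorial i)
        = ∑ i ∈ Finset.range (j + 1),
            (stirlingSecond j i * m.descFactorial (i + 1)
              + i * stirlingSecond j i * m.descFactorial i) := by
      refine Finset.sum_congr rfl fun i _ => ?_
      rw [mul_left_comm, mul_descFactorial, Nat.mul_add]
      ring
    rw [lhs_eq, Finset.sum_add_distrib]
    -- RHS
    rw [Finset.sum_range_succ' (fun i => stirlingSecond (j+1) i * m.descFactorial i) (j+1)]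
    have h0 : stirlingSecond (j + 1) 0 * m.descFactorial 0 = 0 := by simp [stirlingSecond]
    rw [h0, Nat.add_zero]
    have heq : ∀ i, stirlingSecond (j + 1) (i + 1) * m.descFactorial (i + 1)
        = stirlingSecond j i * m.descFactorial (i + 1)
          + (i + 1) * stirlingSecond j (i + 1) * m.descFactorial (i + 1) := by
      intro i
      show ((i + 1) * stirlingSecond j (i + 1) + stirlingSecond j i) * _ = _
      ring
    simp only [heq]
    rw [Finset.sum_add_distrib]
    have hBD : ∑ i ∈ Finset.range (j + 1), i * stirlingSecond j i * m.descFactorial i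
        = ∑ i ∈ Finset.range (j + 1),
            (i + 1) * stirlingSecond j (i + 1) * m.descFactorial (i + 1) := by
      rw [Finset.sum_range_succ' (fun i => i * stirlingSecond j i * m.descFactorial i) j]
      rw [Finset.sum_range_succ (fun i => (i + 1) * stirlingSecond j (i + 1) * m.descFactorial (i + 1)) j]
      rw [stirlingSecond_eq_zero (Nat.lt_succ_self j)]
      simp
    rw [hBD]
    simp

open scoped Nat

lemma descFactorial_add_mul_factorial (m : ℕ) :
    ∀ i : ℕ, (m + i).descFactorial i * m ! = (m + i)!
  | 0 => by simp
  | i + 1 => by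
    rw [show m + (i + 1) = (m + i) + 1 from rfl, Nat.succ_descFactorial_succ,
      Nat.factorial_succ, Nat.mul_assoc, descFactorial_add_mul_factorial m i]

lemma exp_tsum (y : ℝ) : Real.exp y = ∑' n : ℕ, y ^ n / n ! := by
  rw [Real.exp_eq_exp_ℝ, NormedSpace.exp_eq_tsum_div]

/-- summability and value of `∑' m, descFactorial m i * y^m / m!`. -/
lemma descFactorial_shift (i : ℕ) (y : ℝ) (m : ℕ) :
    ((m + i).descFactorial i : ℝ) * y ^ (m + i) / (m + i)! = y ^ i * (y ^ m / m !) := by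
  have h := descFactorial_add_mul_factorial m i
  have hm : (m ! : ℝ) ≠ 0 := Nat.cast_ne_zero.mpr m.factorial_ne_zero
  have hmi : ((m + i)! : ℝ) ≠ 0 := Nat.cast_ne_zero.mpr (m + i).factorial_ne_zero
  have hcast : ((m + i).descFactorial i : ℝ) * (m ! : ℝ) = ((m + i)! : ℝ) := by
    exact_mod_cast congrArg (Nat.cast : ℕ → ℝ) h
  field_simp
  rw [← hcast, pow_add]
  ring

lemma summable_descFactorial (i : ℕ) (y : ℝ) :
    Summable (fun m : ℕ => (m.descFactorial i : ℝ) * y ^ m / m !) := by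
  rw [← summable_nat_add_iff i]
  simp only [descFactorial_shift]
  exact (Real.summable_pow_div_factorial y).mul_left _

lemma tsum_descFactorial (i : ℕ) (y : ℝ) :
    ∑' m : ℕ, (m.descFactorial i : ℝ) * y ^ m / m ! = y ^ i * Real.exp y := by
  have hs := summable_descFactorial i y
  have := (Summable.sum_add_tsum_nat_add (f := fun m : ℕ => (m.descFactorial i : ℝ) * y ^ m / m !) i hs).symm
  rw [this]
  have hzero : ∑ m ∈ Finset.range i, (m.descFactorial i : ℝ) * y ^ m / m ! = 0 := by
    refine Finset.sum_eq_zero fun m hm => ?_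
    rw [Nat.descFactorial_of_lt (Finset.mem_range.mp hm)]
    simp
  rw [hzero, zero_add]
  simp only [descFactorial_shift]
  rw [tsum_mul_left, ← exp_tsum]

/-- Dobinski-type formula. -/
lemma tsum_pow_div_factorial (j : ℕ) (y : ℝ) :
    ∑' m : ℕ, (m : ℝ) ^ j * y ^ m / m ! = Real.exp y * touchard j y := by
  have hpt : ∀ m : ℕ, (m : ℝ) ^ j * y ^ m / m !
      = ∑ i ∈ Finset.range (j + 1), (stirlingSecond j i : ℝ) * ((m.descFactorial i : ℝ) * y ^ m / m !) := by
    intro m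
    have := pow_eq_sum_stirling j m
    have hc : ((m : ℝ)) ^ j = ∑ i ∈ Finset.range (j + 1),
        (stirlingSecond j i : ℝ) * (m.descFactorial i : ℝ) := by exact_mod_cast this
    rw [hc, Finset.sum_mul, Finset.sum_div]
    refine Finset.sum_congr rfl fun i _ => ?_
    ring
  simp only [hpt]
  rw [Summable.tsum_finsetSum (fun i _ => ((summable_descFactorial i y).mul_left _))]
  rw [touchard, Finset.mul_sum]
  refine Finset.sum_congr rfl fun i _ => ?_
  rw [tsum_mul_left, tsum_descFactorial]
  ring

lemma summable_pow_mul (j : ℕ) (y : ℝ) :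
    Summable (fun m : ℕ => (m : ℝ) ^ j * y ^ m / m !) := by
  have hpt : ∀ m : ℕ, (m : ℝ) ^ j * y ^ m / m !
      = ∑ i ∈ Finset.range (j + 1), (stirlingSecond j i : ℝ) * ((m.descFactorial i : ℝ) * y ^ m / m !) := by
    intro m
    have := pow_eq_sum_stirling j m
    have hc : ((m : ℝ)) ^ j = ∑ i ∈ Finset.range (j + 1),
        (stirlingSecond j i : ℝ) * (m.descFactorial i : ℝ) := by exact_mod_cast this
    rw [hc, Finset.sum_mul, Finset.sum_div]
    refine Finset.sum_congr rfl fun i _ => ?_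
    ring
  simp only [hpt]
  exact summable_sum fun i _ => (summable_descFactorial i y).mul_left _

theorem stmt_16 (n : ℕ) (a : ℕ → ℝ) (x : ℝ) :
    ∑ k ∈ Finset.range (n + 1), a k * (-1) ^ k * touchard k (-x) =
      Real.exp x *
        ∑' k : ℕ,
          (-1) ^ k * (∑ j ∈ Finset.range (n + 1), a j * (-(k : ℝ)) ^ j) /
            (Nat.factorial k : ℝ) * x ^ k := by
  have hpt : ∀ k : ℕ, (-1 : ℝ) ^ k * (∑ j ∈ Finset.range (n + 1), a j * (-(k : ℝ)) ^ j) / (k ! : ℝ) * x ^ k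
      = ∑ j ∈ Finset.range (n + 1), a j * (-1 : ℝ) ^ j * ((k : ℝ) ^ j * (-x) ^ k / k !) := by
    intro k
    rw [Finset.mul_sum, Finset.sum_div, Finset.sum_mul]
    refine Finset.sum_congr rfl fun j _ => ?_
    rw [show (-(k : ℝ)) ^ j = (-1) ^ j * (k : ℝ) ^ j by rw [neg_pow],
        show (-x : ℝ) ^ k = (-1) ^ k * x ^ k by rw [neg_pow]]
    ring
  simp only [hpt]
  rw [Summable.tsum_finsetSum (fun j _ => ((summable_pow_mul j (-x)).mul_left _))]
  rw [Finset.mul_sum]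
  refine Finset.sum_congr rfl fun j _ => ?_
  rw [tsum_mul_left, tsum_pow_div_factorial j (-x), Real.exp_neg]
  have h := Real.exp_ne_zero x
  field_simp
end
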